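/- Let p be an odd prime and let G = M(p,e,i) with generators a, b. A map θ defined on the generators extends to an inner automorphism of G if and only if θ(a) = a^{1+μ p^i} and θ(b) = b·a^{η p^i} for some 1 ≤ μ, η ≤ p^{e−i}. -/

import Mathlib

open Subgroup Equiv

namespace Beauville

variable {G : Type*} [Group G]

/-- `𝕋(G)`: generating triples with product 1. -/
def TripleSet (G : Type*) [Group G] : Set (G × G × G) :=
  {t | Subgroup.closure {t.1, t.2.1} = ⊤ ∧ t.1 * t.2.1 * t.2.2 = 1}

lemma mem_tripleSet {x y z : G} :
    (x, y, z) ∈ TripleSet G ↔ Subgroup.closure {x, y} = ⊤ ∧ x * y * z = 1 := Iff.rfl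

lemma closure_pair_top_of {x y u v : G} (h : Subgroup.closure {x, y} = ⊤)
    (hx : x ∈ Subgroup.closure {u, v}) (hy : y ∈ Subgroup.closure {u, v}) :
    Subgroup.closure ({u, v} : Set G) = ⊤ := by
  rw [eq_top_iff, ← h, Subgroup.closure_le]
  intro g hg
  simp only [Set.mem_insert_iff, Set.mem_singleton_iff] at hg
  rcases hg with rfl | rfl
  · exact hx
  · exact hy

lemma mem_cp_left (u v : G) : u ∈ Subgroup.closure ({u, v} : Set G) :=
  Subgroup.subset_closure (Set.mem_insert _ _)

lemma mem_cp_right (u v : G) : v ∈ Subgroup.closure ({u, v} : Set G) :=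
  Subgroup.subset_closure (Set.mem_insert_of_mem _ rfl)

lemma closure_pair_map_top (f : G ≃* G) {x y : G} (h : Subgroup.closure {x, y} = ⊤) :
    Subgroup.closure ({f x, f y} : Set G) = ⊤ := by
  have himg : ({f x, f y} : Set G) = f.toMonoidHom '' {x, y} := (Set.image_pair _ _ _).symm
  rw [himg, ← MonoidHom.map_closure, h, ← MonoidHom.range_eq_map]
  simpa [MonoidHom.range_eq_top] using f.surjective

section Perms

/-- raw permutation `σ₁ : (x,y,z) ↦ (y,z,x)`. -/
def rotRaw : Equiv.Perm (G × G × G) where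
  toFun t := (t.2.1, t.2.2, t.1)
  invFun t := (t.2.2, t.1, t.2.1)
  left_inv _ := rfl
  right_inv _ := rfl

@[simp] lemma rotRaw_apply (t : G × G × G) : rotRaw t = (t.2.1, t.2.2, t.1) := rfl

lemma rotRaw_mem {t : G × G × G} (ht : t ∈ TripleSet G) : rotRaw t ∈ TripleSet G := by
  obtain ⟨x, y, z⟩ := t
  rw [mem_tripleSet] at ht
  obtain ⟨hc, hp⟩ := ht
  rw [rotRaw_apply]
  have hx : x = (y * z)⁻¹ := by
    rw [mul_assoc] at hp
    exact eq_inv_of_mul_eq_one_left hp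
  refine mem_tripleSet.2 ⟨closure_pair_top_of hc ?_ ?_, ?_⟩
  · rw [hx]
    exact inv_mem (mul_mem (mem_cp_left _ _) (mem_cp_right _ _))
  · exact mem_cp_left _ _
  · rw [hx, mul_inv_cancel]

lemma rotRaw_iff (t : G × G × G) : t ∈ TripleSet G ↔ rotRaw t ∈ TripleSet G :=
  ⟨fun h => rotRaw_mem h, fun h => by
    have h2 := rotRaw_mem (rotRaw_mem h)
    rwa [show rotRaw (rotRaw (rotRaw t)) = t by simp] at h2⟩

/-- `σ₁` as a permutation of `𝕋(G)`. -/
def sigma1T (G : Type*) [Group G] : Equiv.Perm (TripleSet G) :=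
  rotRaw.subtypePerm (fun t => (rotRaw_iff t).symm)

/-- `σ₂ = σ₁ ∘ σ₁`, acting as `(x,y,z) ↦ (z,x,y)`. -/
def sigma2T (G : Type*) [Group G] : Equiv.Perm (TripleSet G) :=
  sigma1T G * sigma1T G

/-- raw permutation `σ₃ : (x,y,z) ↦ (z,y,x^y)`. -/
def sigma3Raw : Equiv.Perm (G × G × G) where
  toFun t := (t.2.2, t.2.1, t.2.1⁻¹ * t.1 * t.2.1)
  invFun t := (t.2.1 * t.2.2 * t.2.1⁻¹, t.2.1, t.1)
  left_inv := by rintro ⟨x, y, z⟩; simp [mul_assoc]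
  right_inv := by rintro ⟨x, y, z⟩; simp [mul_assoc]

@[simp] lemma sigma3Raw_apply (t : G × G × G) :
    sigma3Raw t = (t.2.2, t.2.1, t.2.1⁻¹ * t.1 * t.2.1) := rfl

@[simp] lemma sigma3Raw_symm_apply (t : G × G × G) :
    sigma3Raw.symm t = (t.2.1 * t.2.2 * t.2.1⁻¹, t.2.1, t.1) := rfl

lemma sigma3Raw_mem {t : G × G × G} (ht : t ∈ TripleSet G) : sigma3Raw t ∈ TripleSet G := by
  obtain ⟨x, y, z⟩ := t
  rw [mem_tripleSet] at ht
  obtain ⟨hc, hp⟩ := ht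
  have hz : z = (x * y)⁻¹ := eq_inv_of_mul_eq_one_right hp
  rw [sigma3Raw_apply]
  refine mem_tripleSet.2 ⟨closure_pair_top_of hc ?_ ?_, ?_⟩
  · have hxe : x = z⁻¹ * y⁻¹ := by rw [hz]; group
    rw [hxe]
    exact mul_mem (inv_mem (mem_cp_left _ _)) (inv_mem (mem_cp_right _ _))
  · exact mem_cp_right _ _
  · rw [hz]; group

lemma sigma3Raw_symm_mem {t : G × G × G} (ht : t ∈ TripleSet G) :
    sigma3Raw.symm t ∈ TripleSet G := by
  obtain ⟨x, y, z⟩ := t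
  rw [mem_tripleSet] at ht
  obtain ⟨hc, hp⟩ := ht
  have hz : z = (x * y)⁻¹ := eq_inv_of_mul_eq_one_right hp
  rw [sigma3Raw_symm_apply]
  refine mem_tripleSet.2 ⟨closure_pair_top_of hc ?_ ?_, ?_⟩
  · have hxe : x = y⁻¹ * (y * z * y⁻¹)⁻¹ := by rw [hz]; group
    rw [hxe]
    exact mul_mem (inv_mem (mem_cp_right _ _)) (inv_mem (mem_cp_left _ _))
  · exact mem_cp_right _ _
  · rw [hz]; group

lemma sigma3Raw_iff (t : G × G × G) : t ∈ TripleSet G ↔ sigma3Raw t ∈ TripleSet G :=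
  ⟨fun h => sigma3Raw_mem h, fun h => by
    have h2 := sigma3Raw_symm_mem h
    rwa [Equiv.symm_apply_apply] at h2⟩

/-- `σ₃` as a permutation of `𝕋(G)`. -/
def sigma3T (G : Type*) [Group G] : Equiv.Perm (TripleSet G) :=
  sigma3Raw.subtypePerm (fun t => (sigma3Raw_iff t).symm)

/-- raw permutation `σ₄ : (x,y,z) ↦ (y,x,z^x)`. -/
def sigma4Raw : Equiv.Perm (G × G × G) where
  toFun t := (t.2.1, t.1, t.1⁻¹ * t.2.2 * t.1)
  invFun t := (t.2.1, t.1, t.2.1 * t.2.2 * t.2.1⁻¹)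
  left_inv := by rintro ⟨x, y, z⟩; simp [mul_assoc]
  right_inv := by rintro ⟨x, y, z⟩; simp [mul_assoc]

@[simp] lemma sigma4Raw_apply (t : G × G × G) :
    sigma4Raw t = (t.2.1, t.1, t.1⁻¹ * t.2.2 * t.1) := rfl

@[simp] lemma sigma4Raw_symm_apply (t : G × G × G) :
    sigma4Raw.symm t = (t.2.1, t.1, t.2.1 * t.2.2 * t.2.1⁻¹) := rfl

lemma sigma4Raw_mem {t : G × G × G} (ht : t ∈ TripleSet G) : sigma4Raw t ∈ TripleSet G := by
  obtain ⟨x, y, z⟩ := t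
  rw [mem_tripleSet] at ht
  obtain ⟨hc, hp⟩ := ht
  have hz : z = (x * y)⁻¹ := eq_inv_of_mul_eq_one_right hp
  rw [sigma4Raw_apply]
  refine mem_tripleSet.2 ⟨closure_pair_top_of hc ?_ ?_, ?_⟩
  · exact mem_cp_right _ _
  · exact mem_cp_left _ _
  · rw [hz]; group

lemma sigma4Raw_symm_mem {t : G × G × G} (ht : t ∈ TripleSet G) :
    sigma4Raw.symm t ∈ TripleSet G := by
  obtain ⟨x, y, z⟩ := t
  rw [mem_tripleSet] at ht
  obtain ⟨hc, hp⟩ := ht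
  have hz : z = (x * y)⁻¹ := eq_inv_of_mul_eq_one_right hp
  rw [sigma4Raw_symm_apply]
  refine mem_tripleSet.2 ⟨closure_pair_top_of hc ?_ ?_, ?_⟩
  · exact mem_cp_right _ _
  · exact mem_cp_left _ _
  · rw [hz]; group

lemma sigma4Raw_iff (t : G × G × G) : t ∈ TripleSet G ↔ sigma4Raw t ∈ TripleSet G :=
  ⟨fun h => sigma4Raw_mem h, fun h => by
    have h2 := sigma4Raw_symm_mem h
    rwa [Equiv.symm_apply_apply] at h2⟩

/-- `σ₄` as a permutation of `𝕋(G)`. -/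
def sigma4T (G : Type*) [Group G] : Equiv.Perm (TripleSet G) :=
  sigma4Raw.subtypePerm (fun t => (sigma4Raw_iff t).symm)

/-- raw permutation `σ₅ : (x,y,z) ↦ (x,z,y^z)`. -/
def sigma5Raw : Equiv.Perm (G × G × G) where
  toFun t := (t.1, t.2.2, t.2.2⁻¹ * t.2.1 * t.2.2)
  invFun t := (t.1, t.2.1 * t.2.2 * t.2.1⁻¹, t.2.1)
  left_inv := by rintro ⟨x, y, z⟩; simp [mul_assoc]
  right_inv := by rintro ⟨x, y, z⟩; simp [mul_assoc]

@[simp] lemma sigma5Raw_apply (t : G × G × G) :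
    sigma5Raw t = (t.1, t.2.2, t.2.2⁻¹ * t.2.1 * t.2.2) := rfl

@[simp] lemma sigma5Raw_symm_apply (t : G × G × G) :
    sigma5Raw.symm t = (t.1, t.2.1 * t.2.2 * t.2.1⁻¹, t.2.1) := rfl

lemma sigma5Raw_mem {t : G × G × G} (ht : t ∈ TripleSet G) : sigma5Raw t ∈ TripleSet G := by
  obtain ⟨x, y, z⟩ := t
  rw [mem_tripleSet] at ht
  obtain ⟨hc, hp⟩ := ht
  have hz : z = (x * y)⁻¹ := eq_inv_of_mul_eq_one_right hp
  rw [sigma5Raw_apply]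
  refine mem_tripleSet.2 ⟨closure_pair_top_of hc ?_ ?_, ?_⟩
  · exact mem_cp_left _ _
  · have hye : y = x⁻¹ * z⁻¹ := by rw [hz]; group
    rw [hye]
    exact mul_mem (inv_mem (mem_cp_left _ _)) (inv_mem (mem_cp_right _ _))
  · rw [hz]; group

lemma sigma5Raw_symm_mem {t : G × G × G} (ht : t ∈ TripleSet G) :
    sigma5Raw.symm t ∈ TripleSet G := by
  obtain ⟨x, y, z⟩ := t
  rw [mem_tripleSet] at ht
  obtain ⟨hc, hp⟩ := ht
  have hz : z = (x * y)⁻¹ := eq_inv_of_mul_eq_one_right hp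
  rw [sigma5Raw_symm_apply]
  refine mem_tripleSet.2 ⟨closure_pair_top_of hc ?_ ?_, ?_⟩
  · exact mem_cp_left _ _
  · have hv : y * z * y⁻¹ = x⁻¹ * y⁻¹ := by rw [hz]; group
    rw [hv]
    have h2 : (x * (x⁻¹ * y⁻¹))⁻¹ ∈ Subgroup.closure ({x, x⁻¹ * y⁻¹} : Set G) :=
      inv_mem (mul_mem (mem_cp_left _ _) (mem_cp_right _ _))
    simpa using h2
  · rw [hz]; group

lemma sigma5Raw_iff (t : G × G × G) : t ∈ TripleSet G ↔ sigma5Raw t ∈ TripleSet G :=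
  ⟨fun h => sigma5Raw_mem h, fun h => by
    have h2 := sigma5Raw_symm_mem h
    rwa [Equiv.symm_apply_apply] at h2⟩

/-- `σ₅` as a permutation of `𝕋(G)`. -/
def sigma5T (G : Type*) [Group G] : Equiv.Perm (TripleSet G) :=
  sigma5Raw.subtypePerm (fun t => (sigma5Raw_iff t).symm)

end Perms


/-- Evaluation of a word in two letters at a pair of group elements. -/
def wordEval (w : FreeGroup Bool) (x y : G) : G :=
  FreeGroup.lift (fun b => bif b then x else y) w

lemma wordEval_conj (w : FreeGroup Bool) (x y c : G) :
    wordEval w (c⁻¹ * x * c) (c⁻¹ * y * c) = c⁻¹ * wordEval w x y * c := by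
  have key : FreeGroup.lift (fun b => bif b then c⁻¹ * x * c else c⁻¹ * y * c) =
      ((MulAut.conj c⁻¹).toMonoidHom.comp (FreeGroup.lift (fun b => bif b then x else y))) := by
    apply FreeGroup.ext_hom
    intro b
    cases b <;> simp [MulAut.conj_apply, mul_assoc]
  unfold wordEval
  rw [key]
  simp [MulAut.conj_apply, mul_assoc]

/-- Conjugation of a triple by a group element (`t^c`). -/
def conjTriple (c : G) (t : G × G × G) : G × G × G :=
  (c⁻¹ * t.1 * c, c⁻¹ * t.2.1 * c, c⁻¹ * t.2.2 * c)

lemma conjTriple_conjTriple (c d : G) (t : G × G × G) :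
    conjTriple d (conjTriple c t) = conjTriple (c * d) t := by
  simp [conjTriple, mul_assoc]

@[simp] lemma conjTriple_one (t : G × G × G) : conjTriple 1 t = t := by
  simp [conjTriple]

lemma conjTriple_mem (c : G) {t : G × G × G} (ht : t ∈ TripleSet G) :
    conjTriple c t ∈ TripleSet G := by
  obtain ⟨x, y, z⟩ := t
  rw [mem_tripleSet] at ht
  obtain ⟨hc, hp⟩ := ht
  refine mem_tripleSet.2 ⟨?_, ?_⟩
  · have h1 : (c⁻¹ * x * c : G) = (MulAut.conj c⁻¹ : G ≃* G) x := by
      simp [MulAut.conj_apply]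
    have h2 : (c⁻¹ * y * c : G) = (MulAut.conj c⁻¹ : G ≃* G) y := by
      simp [MulAut.conj_apply]
    rw [h1, h2]
    exact closure_pair_map_top _ hc
  · have : c⁻¹ * x * c * (c⁻¹ * y * c) * (c⁻¹ * z * c) = c⁻¹ * (x * y * z) * c := by group
    rw [this, hp]
    group

/-- The raw permutation `β_w : t ↦ t^{w(x,y)}`. -/
def betaRaw (w : FreeGroup Bool) : Equiv.Perm (G × G × G) where
  toFun t := conjTriple (wordEval w t.1 t.2.1) t
  invFun t := conjTriple (wordEval w t.1 t.2.1)⁻¹ t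
  left_inv := by
    rintro ⟨x, y, z⟩
    have h1 : wordEval w (conjTriple (wordEval w x y) (x, y, z)).1
        (conjTriple (wordEval w x y) (x, y, z)).2.1 = wordEval w x y := by
      show wordEval w ((wordEval w x y)⁻¹ * x * wordEval w x y)
          ((wordEval w x y)⁻¹ * y * wordEval w x y) = _
      rw [wordEval_conj]
      group
    show conjTriple _ (conjTriple (wordEval w x y) (x, y, z)) = (x, y, z)
    rw [h1, conjTriple_conjTriple, mul_inv_cancel, conjTriple_one]
  right_inv := by
    rintro ⟨x, y, z⟩
    have h1 : wordEval w (conjTriple (wordEval w x y)⁻¹ (x, y, z)).1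
        (conjTriple (wordEval w x y)⁻¹ (x, y, z)).2.1 = wordEval w x y := by
      show wordEval w ((wordEval w x y)⁻¹⁻¹ * x * (wordEval w x y)⁻¹)
          ((wordEval w x y)⁻¹⁻¹ * y * (wordEval w x y)⁻¹) = _
      rw [wordEval_conj]
      group
    show conjTriple _ (conjTriple (wordEval w x y)⁻¹ (x, y, z)) = (x, y, z)
    rw [h1, conjTriple_conjTriple, inv_mul_cancel, conjTriple_one]

lemma betaRaw_iff (w : FreeGroup Bool) (t : G × G × G) :
    t ∈ TripleSet G ↔ betaRaw w t ∈ TripleSet G := by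
  constructor
  · intro h
    exact conjTriple_mem _ h
  · intro h
    have h2 : (betaRaw w).symm (betaRaw w t) ∈ TripleSet G := conjTriple_mem _ h
    rwa [Equiv.symm_apply_apply] at h2

/-- `β_w` as a permutation of `𝕋(G)`. -/
def betaT (G : Type*) [Group G] (w : FreeGroup Bool) : Equiv.Perm (TripleSet G) :=
  (betaRaw w).subtypePerm (fun t => (betaRaw_iff w t).symm)

/-- The raw diagonal action of an automorphism on triples. -/
def autRaw (α : MulAut G) : Equiv.Perm (G × G × G) :=
  Equiv.prodCongr (α : G ≃* G).toEquiv
    (Equiv.prodCongr (α : G ≃* G).toEquiv (α : G ≃* G).toEquiv)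

@[simp] lemma autRaw_apply (α : MulAut G) (t : G × G × G) :
    autRaw α t = (α t.1, α t.2.1, α t.2.2) := rfl

lemma autRaw_mem (α : MulAut G) {t : G × G × G} (ht : t ∈ TripleSet G) :
    autRaw α t ∈ TripleSet G := by
  obtain ⟨x, y, z⟩ := t
  rw [mem_tripleSet] at ht
  obtain ⟨hc, hp⟩ := ht
  rw [autRaw_apply]
  refine mem_tripleSet.2 ⟨closure_pair_map_top (α : G ≃* G) hc, ?_⟩
  rw [← map_mul, ← map_mul, hp, map_one]

lemma autRaw_symm_apply (α : MulAut G) (t : G × G × G) :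
    (autRaw α).symm t = autRaw α⁻¹ t := rfl

lemma autRaw_iff (α : MulAut G) (t : G × G × G) :
    t ∈ TripleSet G ↔ autRaw α t ∈ TripleSet G := by
  constructor
  · exact fun h => autRaw_mem α h
  · intro h
    have h2 := autRaw_mem α⁻¹ h
    rw [← autRaw_symm_apply, Equiv.symm_apply_apply] at h2
    exact h2

/-- `α̃`, the diagonal action of an automorphism on `𝕋(G)`. -/
def dAutT (α : MulAut G) : Equiv.Perm (TripleSet G) :=
  (autRaw α).subtypePerm (fun t => (autRaw_iff α t).symm)

/-- `ι̃_g`, the diagonal action of the inner automorphism `ι_g` on `𝕋(G)`. -/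
def dInnT (g : G) : Equiv.Perm (TripleSet G) :=
  dAutT (MulAut.conj g)

/-- `J(G) = {β_w : w a word in two letters}`. -/
def JSet (G : Type*) [Group G] : Set (Equiv.Perm (TripleSet G)) :=
  Set.range (betaT G)

/-- The subgroup `⟨σ₁, σ₄⟩` of `Sym(𝕋(G))`. -/
def SS14 (G : Type*) [Group G] : Subgroup (Equiv.Perm (TripleSet G)) :=
  Subgroup.closure {sigma1T G, sigma4T G}

/-- `I(G) = ⟨DInn(G), σ₁, σ₂, σ₃, σ₄, σ₅⟩`. -/
def IGroup (G : Type*) [Group G] : Subgroup (Equiv.Perm (TripleSet G)) :=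
  Subgroup.closure (Set.range (dInnT (G := G)) ∪
    {sigma1T G, sigma2T G, sigma3T G, sigma4T G, sigma5T G})


/-- `Σ(x,y)`: the union of all conjugates of `⟨x⟩`, `⟨y⟩` and `⟨x*y⟩`. -/
def sigmaSet (x y : G) : Set G :=
  ⋃ g : G, (fun h => g * h * g⁻¹) ''
    ((Subgroup.zpowers x : Set G) ∪ (Subgroup.zpowers y : Set G) ∪
      (Subgroup.zpowers (x * y) : Set G))

/-- An (unmixed) Beauville structure for `G`. -/
def IsBeauvilleStructure (t : (G × G × G) × (G × G × G)) : Prop :=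
  ∃ x₁ y₁ x₂ y₂ : G,
    t = ((x₁, y₁, (x₁ * y₁)⁻¹), (x₂, y₂, (x₂ * y₂)⁻¹)) ∧
    Subgroup.closure {x₁, y₁} = ⊤ ∧ Subgroup.closure {x₂, y₂} = ⊤ ∧
    sigmaSet x₁ y₁ ∩ sigmaSet x₂ y₂ = {1}

/-- `𝕌(G)`, the set of all Beauville structures for `G`, as a subset of `G³ × G³`. -/
def beauvilleStructures (G : Type*) [Group G] : Set ((G × G × G) × (G × G × G)) :=
  {t | IsBeauvilleStructure t}

/-- A Beauville group is a group admitting a Beauville structure. -/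
def IsBeauvilleGroup (G : Type*) [Group G] : Prop :=
  ∃ t : (G × G × G) × (G × G × G), IsBeauvilleStructure t

/-- A metacyclic group: it has a cyclic normal subgroup with cyclic quotient. -/
def IsMetacyclic (G : Type*) [Group G] : Prop :=
  ∃ (N : Subgroup G) (hN : N.Normal), IsCyclic N ∧
    (haveI := hN; IsCyclic (G ⧸ N))

/-- `𝕌(G)` viewed as a subset of `𝕋(G) × 𝕋(G)`. -/
def USet (G : Type*) [Group G] : Set (TripleSet G × TripleSet G) :=
  {t | IsBeauvilleStructure ((t.1 : G × G × G), (t.2 : G × G × G))}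

/-- Generators of `B(G)`: the permutations of `𝕌(G)` induced by the componentwise action
of `I(G) × I(G)` and by the diagonal action of `Aut(G)`. -/
def BGens (G : Type*) [Group G] : Set (Equiv.Perm (USet G)) :=
  {π | ∃ ρ₁ ∈ IGroup G, ∃ ρ₂ ∈ IGroup G,
      ∀ t : USet G, ((π t : TripleSet G × TripleSet G)) = (ρ₁ (t : TripleSet G × TripleSet G).1, ρ₂ (t : TripleSet G × TripleSet G).2)} ∪
  {π | ∃ α : MulAut G,
      ∀ t : USet G, ((π t : TripleSet G × TripleSet G)) = (dAutT α (t : TripleSet G × TripleSet G).1, dAutT α (t : TripleSet G × TripleSet G).2)}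

/-- The permutation(s) of `𝕌(G)` exchanging the two triples. -/
def tauGens (G : Type*) [Group G] : Set (Equiv.Perm (USet G)) :=
  {π | ∀ t : USet G, ((π t : TripleSet G × TripleSet G)) =
      ((t : TripleSet G × TripleSet G).2, (t : TripleSet G × TripleSet G).1)}

/-- `B(G)`, the subgroup of `Sym(𝕌(G))` generated by the action of `I(G) × I(G)`
and the diagonal action of `Aut(G)`. -/
def BGroup (G : Type*) [Group G] : Subgroup (Equiv.Perm (USet G)) :=
  Subgroup.closure (BGens G)

/-- `A_𝕌(G) = ⟨B(G), τ⟩`. -/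
def AUGroup (G : Type*) [Group G] : Subgroup (Equiv.Perm (USet G)) :=
  Subgroup.closure (BGens G ∪ tauGens G)


/-- The subgroup of `G` generated by all `n`-th powers. -/
def powSubgroup (G : Type*) [Group G] (n : ℕ) : Subgroup G :=
  Subgroup.closure (Set.range fun g : G => g ^ n)

/-- The subgroup of inner automorphisms, `Inn(G)`. -/
def innAut (G : Type*) [Group G] : Subgroup (MulAut G) :=
  (MulAut.conj : G →* MulAut G).range

instance innAut_normal (G : Type*) [Group G] : (innAut G).Normal := by
  constructor
  rintro - ⟨g, rfl⟩ α
  refine ⟨α g, ?_⟩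
  ext x
  simp only [MulAut.conj_apply, MulAut.mul_apply, MulAut.inv_def, map_mul, map_inv,
    MulEquiv.apply_symm_apply]

section Presented

open scoped commutatorElement

/-- The two generators of the free group on two letters. -/
def fA : FreeGroup Bool := FreeGroup.of true

def fB : FreeGroup Bool := FreeGroup.of false

/-- Relations of `M(p,e,i) = ⟨a,b ∣ a^{p^e} = b^{p^e} = 1, [a,b] = a^{p^i}⟩`. -/
def MRels (p e i : ℕ) : Set (FreeGroup Bool) :=
  {fA ^ p ^ e, fB ^ p ^ e, ⁅fA, fB⁆ * (fA ^ p ^ i)⁻¹}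

/-- The metacyclic group `M(p,e,i)`. -/
abbrev MGroup (p e i : ℕ) : Type := PresentedGroup (MRels p e i)

def ma (p e i : ℕ) : MGroup p e i := PresentedGroup.of true

def mb (p e i : ℕ) : MGroup p e i := PresentedGroup.of false

/-- Relations of
`H(p,e,i,j,k) = ⟨a,b ∣ a^{p^e} = [b,a]^{p^j} = [b,a,a] = [b,a,b] = 1, b^{p^i} = [b,a]^{p^k}⟩`. -/
def HRels (p e i j k : ℕ) : Set (FreeGroup Bool) :=
  {fA ^ p ^ e, ⁅fB, fA⁆ ^ p ^ j, ⁅⁅fB, fA⁆, fA⁆, ⁅⁅fB, fA⁆, fB⁆,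
    fB ^ p ^ i * (⁅fB, fA⁆ ^ p ^ k)⁻¹}

/-- The group `H(p,e,i,j,k)` of nilpotency class 2. -/
abbrev HGroup (p e i j k : ℕ) : Type := PresentedGroup (HRels p e i j k)

def ha (p e i j k : ℕ) : HGroup p e i j k := PresentedGroup.of true

def hb (p e i j k : ℕ) : HGroup p e i j k := PresentedGroup.of false

/-- Relations of
`K(p,e,j) = ⟨a,b ∣ a^{p^e} = b^{p^e} = [b,a]^{p^j} = [b,a,b] = [b,a,a] = 1⟩`. -/
def KRels (p e j : ℕ) : Set (FreeGroup Bool) :=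
  {fA ^ p ^ e, fB ^ p ^ e, ⁅fB, fA⁆ ^ p ^ j, ⁅⁅fB, fA⁆, fB⁆, ⁅⁅fB, fA⁆, fA⁆}

/-- The group `K(p,e,j)` of nilpotency class 2. -/
abbrev KGroup (p e j : ℕ) : Type := PresentedGroup (KRels p e j)

def ka (p e j : ℕ) : KGroup p e j := PresentedGroup.of true

def kb (p e j : ℕ) : KGroup p e j := PresentedGroup.of false

end Presented

/-! Writing `r = 1 - p ^ i`, the relation `⁅a, b⁆ = a ^ p ^ i` says `b * a * b⁻¹ = a ^ r`, so
every element is `a ^ t * b ^ s`, and conjugation by it sends `a ↦ a ^ r ^ s` and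
`b ↦ a ^ (p ^ i * t) * b`. Hence `a` is always sent to some `a ^ (1 + μ * p ^ i)` and `b` to some
`b * a ^ (η * p ^ i)`. Conversely the `t` needed for a prescribed `η` is explicit, and every residue
`1 + μ * p ^ i` modulo `p ^ e` is a power of `r`: for odd `p` the order of `r` modulo `p ^ e` is
`p ^ (e - i)`, which is exactly the number of such residues. -/

section InnerAutomorphisms

open scoped commutatorElement

theorem orderOf_one_sub_prime_pow {p i : ℕ} (hp : p.Prime) (hi : i ≠ 0) (hpi : i + 2 ≤ p * i)
    (N : ℕ) : orderOf (1 - (p : ZMod (p ^ (N + i))) ^ i) = p ^ N := by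
  have hp1 : ¬ (p : ℤ) ∣ -1 := by
    rw [Int.dvd_neg, ← Int.natCast_one, Int.natCast_dvd_natCast]
    exact hp.not_dvd_one
  simpa [sub_eq_add_neg] using ZMod.orderOf_one_add_mul_prime_pow hp i hi hpi (-1) hp1 N

theorem exists_lt_natCast_mul_eq {n m : ℕ} [NeZero (n * m)] (c : ZMod (n * m)) :
    ∃ k < n, (k : ZMod (n * m)) * m = c * m := by
  have hn : 0 < n := Nat.pos_of_ne_zero (left_ne_zero_of_mul (NeZero.ne (n * m)))
  have hnm : (n : ZMod (n * m)) * m = 0 := by rw [← Nat.cast_mul, ZMod.natCast_self]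
  refine ⟨c.val % n, Nat.mod_lt _ hn, ?_⟩
  calc ((c.val % n : ℕ) : ZMod (n * m)) * m
      = ((c.val % n + n * (c.val / n) : ℕ) : ZMod (n * m)) * m := by
        push_cast
        linear_combination -((c.val / n : ℕ) : ZMod (n * m)) * hnm
    _ = c * m := by rw [Nat.mod_add_div, ZMod.natCast_zmod_val]

theorem exists_pow_eq_one_add_mul {n m : ℕ} [NeZero (n * m)] {u : ZMod (n * m)}
    (hu : orderOf u = n) (hum : (m : ZMod (n * m)) ∣ u - 1) (k : ℕ) :
    ∃ s : ℕ, u ^ s = 1 + k * m := by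
  classical
  set S := (Finset.range n).image fun k : ℕ => (1 + k * m : ZMod (n * m))
  set T := (Finset.range n).image (u ^ ·)
  have hTS : T ⊆ S := by
    intro x hx
    obtain ⟨s, -, rfl⟩ := Finset.mem_image.1 hx
    obtain ⟨c, hc⟩ := hum.trans (sub_one_dvd_pow_sub_one u s)
    obtain ⟨l, hl, hlc⟩ := exists_lt_natCast_mul_eq c
    exact Finset.mem_image.2 ⟨l, Finset.mem_range.2 hl, by linear_combination hlc - hc⟩
  have hT : T.card = n := by
    rw [Finset.card_image_of_injOn, Finset.card_range]
    have h := pow_injOn_Iio_orderOf (x := u)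
    rwa [hu, ← Finset.coe_range] at h
  have hcard : S.card ≤ T.card := by
    rw [hT]
    exact Finset.card_image_le.trans (Finset.card_range n).le
  obtain ⟨l, hl, hlk⟩ := exists_lt_natCast_mul_eq (k : ZMod (n * m))
  have hS : 1 + (l : ZMod (n * m)) * m ∈ S := Finset.mem_image.2 ⟨l, Finset.mem_range.2 hl, rfl⟩
  rw [← Finset.eq_of_subset_of_card_le hTS hcard] at hS
  obtain ⟨s, -, hs⟩ := Finset.mem_image.1 hS
  exact ⟨s, by rw [hs, hlk]⟩

theorem exists_one_sub_prime_pow_pow_modEq {p i : ℕ} (hp : p.Prime) (hi : i ≠ 0)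
    (hpi : i + 2 ≤ p * i) (N μ : ℕ) :
    ∃ s : ℕ, (1 - (p : ℤ) ^ i) ^ s ≡ 1 + μ * p ^ i [ZMOD (p ^ (N + i) : ℕ)] := by
  have : NeZero (p ^ N * p ^ i) := NeZero.of_pos (by have := hp.pos; positivity)
  have hu := orderOf_one_sub_prime_pow hp hi hpi N
  rw [pow_add] at hu ⊢
  obtain ⟨s, hs⟩ := exists_pow_eq_one_add_mul hu (by simp) μ
  exact ⟨s, (ZMod.intCast_eq_intCast_iff _ _ _).1 (by exact_mod_cast hs)⟩

theorem zpow_eq_zpow_of_modEq {x : G} {n : ℕ} (hx : x ^ n = 1) {k l : ℤ} (h : k ≡ l [ZMOD n]) :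
    x ^ k = x ^ l :=
  zpow_eq_zpow_iff_modEq.2 (h.of_dvd (Int.natCast_dvd_natCast.2 (orderOf_dvd_of_pow_eq_one hx)))

theorem exists_zpow_eq_pow_of_pow_eq_one {x : G} {n : ℕ} (hn : n ≠ 0) (hx : x ^ n = 1) (z : ℤ) :
    ∃ k : ℕ, 1 ≤ k ∧ k ≤ n ∧ x ^ z = x ^ k := by
  have h0 := Int.emod_nonneg (z - 1) (Int.natCast_ne_zero.2 hn)
  have hlt := Int.emod_lt_of_pos (z - 1) (Int.natCast_pos.2 (Nat.pos_of_ne_zero hn))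
  refine ⟨((z - 1) % n).toNat + 1, by omega, by omega, ?_⟩
  rw [← zpow_natCast, Nat.cast_add, Int.toNat_of_nonneg h0, Nat.cast_one, zpow_add_one,
    ← zpow_eq_zpow_emod' _ hx, ← zpow_add_one, sub_add_cancel]

variable {a b : G} {r : ℤ}

theorem conj_eq_zpow_of_commutatorElement_eq {n : ℕ} (h : ⁅a, b⁆ = a ^ n) :
    b * a * b⁻¹ = a ^ (1 - (n : ℤ)) := by
  rw [commutatorElement_def] at h
  rw [sub_eq_neg_add, zpow_add, zpow_one, zpow_neg, zpow_natCast, ← h]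
  group

theorem conj_pow_zpow (hr : b * a * b⁻¹ = a ^ r) (s : ℕ) (t : ℤ) :
    b ^ s * a ^ t * (b ^ s)⁻¹ = a ^ (r ^ s * t) := by
  induction s with
  | zero => simp
  | succ s ih =>
    calc b ^ (s + 1) * a ^ t * (b ^ (s + 1))⁻¹ = b * (b ^ s * a ^ t * (b ^ s)⁻¹) * b⁻¹ := by group
      _ = (b * a * b⁻¹) ^ (r ^ s * t) := by rw [ih, conj_zpow]
      _ = a ^ (r ^ (s + 1) * t) := by rw [hr, ← zpow_mul, pow_succ', mul_assoc]

theorem mul_zpow_eq_zpow_mul (hr : b * a * b⁻¹ = a ^ r) (t : ℤ) : b * a ^ t = a ^ (r * t) * b := by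
  rw [zpow_mul, ← hr, conj_zpow]
  group

theorem exists_eq_zpow_mul_pow (hgen : closure {a, b} = ⊤) (hr : b * a * b⁻¹ = a ^ r)
    (hb : IsOfFinOrder b) (g : G) : ∃ (t : ℤ) (s : ℕ), g = a ^ t * b ^ s := by
  obtain ⟨m, hm⟩ : ∃ m : ℕ, b ^ m = b⁻¹ :=
    hb.mem_powers_iff_mem_zpowers.2 (inv_mem (mem_zpowers b))
  have hgen' : g ∈ closure {a, b} := hgen ▸ mem_top g
  induction hgen' using Subgroup.closure_induction_left with
  | one => exact ⟨0, 0, by simp⟩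
  | mul_left x hx y _ ih =>
    obtain ⟨t, s, rfl⟩ := ih
    rcases hx with rfl | rfl
    · exact ⟨t + 1, s, by group⟩
    · exact ⟨r * t, s + 1, by rw [← mul_assoc, mul_zpow_eq_zpow_mul hr, mul_assoc, pow_succ']⟩
  | inv_mul_cancel x hx y _ ih =>
    obtain ⟨t, s, rfl⟩ := ih
    rcases hx with rfl | rfl
    · exact ⟨t - 1, s, by group⟩
    · refine ⟨r ^ m * t, m + s, ?_⟩
      rw [← hm, ← conj_pow_zpow hr m t, pow_add]
      group

theorem zpow_mul_eq_mul_zpow (hr : b * a * b⁻¹ = a ^ r) {m : ℕ} (hm : b ^ m = b⁻¹) (t : ℤ) :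
    a ^ t * b = b * a ^ (r ^ m * t) := by
  rw [← conj_pow_zpow hr m t, hm]
  group

theorem conj_zpow_mul_pow_apply_left (hr : b * a * b⁻¹ = a ^ r) (t : ℤ) (s : ℕ) :
    MulAut.conj (a ^ t * b ^ s) a = a ^ r ^ s := by
  calc MulAut.conj (a ^ t * b ^ s) a = a ^ t * (b ^ s * a ^ (1 : ℤ) * (b ^ s)⁻¹) * a ^ (-t) := by
        rw [MulAut.conj_apply]
        group
    _ = a ^ r ^ s := by
        rw [conj_pow_zpow hr, mul_one, ← zpow_add, ← zpow_add]
        ring_nf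

theorem conj_zpow_mul_pow_apply_right (hr : b * a * b⁻¹ = a ^ r) (t : ℤ) (s : ℕ) :
    MulAut.conj (a ^ t * b ^ s) b = a ^ ((1 - r) * t) * b := by
  calc MulAut.conj (a ^ t * b ^ s) b = a ^ t * (b * a ^ (-t)) := by
        rw [MulAut.conj_apply]
        group
    _ = a ^ ((1 - r) * t) * b := by
        rw [mul_zpow_eq_zpow_mul hr, ← mul_assoc, ← zpow_add]
        ring_nf

theorem exists_apply_eq_of_mem_innAut {d n : ℕ} (hgen : closure {a, b} = ⊤)
    (hr : b * a * b⁻¹ = a ^ (1 - (d : ℤ))) (hb : IsOfFinOrder b) (hn : n ≠ 0)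
    (ha : (a ^ d) ^ n = 1) {θ : MulAut G} (hθ : θ ∈ innAut G) :
    ∃ μ η : ℕ, 1 ≤ μ ∧ μ ≤ n ∧ 1 ≤ η ∧ η ≤ n ∧
      θ a = a ^ (1 + μ * d) ∧ θ b = b * a ^ (η * d) := by
  obtain ⟨g, rfl⟩ := hθ
  obtain ⟨t, s, rfl⟩ := exists_eq_zpow_mul_pow hgen hr hb g
  obtain ⟨m, hm⟩ : ∃ m : ℕ, b ^ m = b⁻¹ :=
    hb.mem_powers_iff_mem_zpowers.2 (inv_mem (mem_zpowers b))
  obtain ⟨x, hx⟩ : (d : ℤ) ∣ (1 - (d : ℤ)) ^ s - 1 := by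
    simpa using sub_one_dvd_pow_sub_one (1 - (d : ℤ)) s
  obtain ⟨μ, hμ1, hμn, hμ⟩ := exists_zpow_eq_pow_of_pow_eq_one hn ha x
  obtain ⟨η, hη1, hηn, hη⟩ := exists_zpow_eq_pow_of_pow_eq_one hn ha ((1 - (d : ℤ)) ^ m * t)
  refine ⟨μ, η, hμ1, hμn, hη1, hηn, ?_, ?_⟩
  · calc MulAut.conj (a ^ t * b ^ s) a = a ^ (1 + (d : ℤ) * x) := by
          rw [conj_zpow_mul_pow_apply_left hr, ← hx, add_sub_cancel]
      _ = a * (a ^ d) ^ μ := by rw [zpow_add, zpow_one, zpow_mul, zpow_natCast, hμ]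
      _ = a ^ (1 + μ * d) := by rw [pow_add, pow_one, mul_comm μ, pow_mul]
  · calc MulAut.conj (a ^ t * b ^ s) b = a ^ ((d : ℤ) * t) * b := by
          rw [conj_zpow_mul_pow_apply_right hr, sub_sub_cancel]
      _ = b * (a ^ d) ^ η := by
          rw [zpow_mul_eq_mul_zpow hr hm, mul_left_comm, zpow_mul, zpow_natCast, hη]
      _ = b * a ^ (η * d) := by rw [mul_comm η, pow_mul]

theorem mem_innAut_of_apply_eq {d q s μ η : ℕ} (hgen : closure {a, b} = ⊤)
    (hr : b * a * b⁻¹ = a ^ (1 - (d : ℤ))) (ha : a ^ q = 1)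
    (hs : (1 - (d : ℤ)) ^ s ≡ 1 + μ * d [ZMOD q])
    {θ : MulAut G} (hA : θ a = a ^ (1 + μ * d)) (hB : θ b = b * a ^ (η * d)) :
    θ ∈ innAut G := by
  refine ⟨a ^ ((1 - (d : ℤ)) * η) * b ^ s,
    MulEquiv.toMonoidHom_injective (MonoidHom.eq_of_eqOn_dense hgen ?_)⟩
  rintro x (rfl | rfl)
  · change MulAut.conj _ x = θ x
    rw [conj_zpow_mul_pow_apply_left hr, hA, zpow_eq_zpow_of_modEq ha hs]
    norm_cast
  · change MulAut.conj _ x = θ x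
    rw [conj_zpow_mul_pow_apply_right hr, hB, ← zpow_natCast, mul_zpow_eq_zpow_mul hr]
    congr 2
    push_cast
    ring

theorem mem_innAut_iff_of_commutatorElement_eq {p i N : ℕ} (hp : p.Prime) (hi : i ≠ 0)
    (hpi : i + 2 ≤ p * i) (hgen : closure {a, b} = ⊤) (ha : a ^ p ^ (N + i) = 1)
    (hb : IsOfFinOrder b) (hab : ⁅a, b⁆ = a ^ p ^ i) (θ : MulAut G) :
    θ ∈ innAut G ↔ ∃ μ η : ℕ, 1 ≤ μ ∧ μ ≤ p ^ N ∧ 1 ≤ η ∧ η ≤ p ^ N ∧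
      θ a = a ^ (1 + μ * p ^ i) ∧ θ b = b * a ^ (η * p ^ i) := by
  have hr := conj_eq_zpow_of_commutatorElement_eq hab
  refine ⟨exists_apply_eq_of_mem_innAut hgen hr hb (pow_ne_zero N hp.ne_zero) ?_, ?_⟩
  · rwa [← pow_mul, ← pow_add, add_comm]
  · rintro ⟨μ, η, -, -, -, -, hA, hB⟩
    obtain ⟨s, hs⟩ := exists_one_sub_prime_pow_pow_modEq hp hi hpi N μ
    exact mem_innAut_of_apply_eq hgen hr ha (by push_cast; exact hs) hA hB

theorem pow_ma_eq_one (p e i : ℕ) : ma p e i ^ p ^ e = 1 := by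
  have h := PresentedGroup.one_of_mem (rels := MRels p e i) (Set.mem_insert _ _)
  rwa [map_pow] at h

theorem pow_mb_eq_one (p e i : ℕ) : mb p e i ^ p ^ e = 1 := by
  have h := PresentedGroup.one_of_mem (rels := MRels p e i)
    (Set.mem_insert_of_mem _ (Set.mem_insert _ _))
  rwa [map_pow] at h

theorem commutatorElement_ma_mb (p e i : ℕ) : ⁅ma p e i, mb p e i⁆ = ma p e i ^ p ^ i := by
  have h := PresentedGroup.one_of_mem (rels := MRels p e i)
    (Set.mem_insert_of_mem _ (Set.mem_insert_of_mem _ rfl))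
  rwa [map_mul, map_inv, map_commutatorElement, map_pow, mul_inv_eq_one] at h

theorem closure_ma_mb (p e i : ℕ) : closure {ma p e i, mb p e i} = ⊤ := by
  rw [← PresentedGroup.closure_range_of (MRels p e i)]
  congr 1
  ext x
  simp [ma, mb, or_comm]

end InnerAutomorphisms

section Statements

theorem statement4_general (p e i : ℕ) (hp : p.Prime) (hodd : Odd p) (h1 : 1 ≤ i) :
    ∀ θ : MulAut (MGroup p e i),
      θ ∈ innAut (MGroup p e i) ↔
      ∃ μ η : ℕ, 1 ≤ μ ∧ μ ≤ p ^ (e - i) ∧ 1 ≤ η ∧ η ≤ p ^ (e - i) ∧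
        θ (ma p e i) = ma p e i ^ (1 + μ * p ^ i) ∧
        θ (mb p e i) = mb p e i * ma p e i ^ (η * p ^ i) := by
  have hpi : i + 2 ≤ p * i := by
    obtain ⟨k, rfl⟩ := hodd
    have hk : 1 ≤ k := by have := hp.two_le; omega
    nlinarith
  have ha : ma p e i ^ p ^ (e - i + i) = 1 :=
    orderOf_dvd_iff_pow_eq_one.1 ((orderOf_dvd_of_pow_eq_one (pow_ma_eq_one p e i)).trans
      (pow_dvd_pow p (by omega)))
  exact mem_innAut_iff_of_commutatorElement_eq hp (by omega) hpi (closure_ma_mb p e i) ha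
    (isOfFinOrder_iff_pow_eq_one.2 ⟨p ^ e, pow_pos hp.pos e, pow_mb_eq_one p e i⟩)
    (commutatorElement_ma_mb p e i)

theorem statement4 (p e i : ℕ) (hp : p.Prime) (hodd : Odd p) (h1 : 1 ≤ i) (h2 : i ≤ e - 1) :
    ∀ θ : MulAut (MGroup p e i),
      θ ∈ innAut (MGroup p e i) ↔
      ∃ μ η : ℕ, 1 ≤ μ ∧ μ ≤ p ^ (e - i) ∧ 1 ≤ η ∧ η ≤ p ^ (e - i) ∧
        θ (ma p e i) = ma p e i ^ (1 + μ * p ^ i) ∧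
        θ (mb p e i) = mb p e i * ma p e i ^ (η * p ^ i) :=
  statement4_general p e i hp hodd h1

end Statements

end Beauville
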